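/- arXiv:1702.03869 — 2 statements merged into one kernel-verified Lean document; each statement's English description precedes it below -/
import Mathlib

section
/- ∑_{n=1}^∞ (1/n³) ∑_{k=1}^n (-1)^{k-1}/k = (7/4)ζ(3)ln 2 − (5/16)ζ(4). -/
open Real Filter

/-- Generalized harmonic number `H_n^(m) = ∑_{j=1}^n 1/j^m`. -/
noncomputable def H (m n : ℕ) : ℝ := ∑ j ∈ Finset.range n, 1 / ((j : ℝ) + 1) ^ m

/-- Riemann zeta value `ζ(r) = ∑_{n=1}^∞ 1/n^r`. -/
noncomputable def zt (r : ℕ) : ℝ := ∑' n : ℕ, 1 / ((n : ℝ) + 1) ^ r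

/-- Polylogarithm `Li_p(x)`, with `Li_1(x) = -log(1-x)`. -/
noncomputable def Li (p : ℕ) (x : ℝ) : ℝ :=
  if p = 1 then -Real.log (1 - x) else ∑' n : ℕ, x ^ (n + 1) / ((n : ℝ) + 1) ^ p

/-!
Writing `∑_{k ≤ n} (-1)^k / (k + 1) = ∫_{-1}^0 ∑_{k ≤ n} y^k dy` and summing under the
integral (the geometric sums are bounded by `2` on `[-1, 0]`) turns the series into
`∫_{-1}^0 (ζ(3) - Li₃ y) / (1 - y) dy`. Since `Li_{p+1}' = Li_p / y` and `Li₁' = 1 / (1 - y)`,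
the function `Li₁ Li₃ - Li₂² / 2` is an antiderivative of `Li₃ y / (1 - y)`, so everything
reduces to `Li_p(-1) = (2^{1-p} - 1) ζ(p)`, `Li₁(-1) = -log 2`, `ζ(2) = π²/6`, `ζ(4) = π⁴/90`.
-/

open MeasureTheory Set intervalIntegral
open scoped Interval

lemma summable_one_div_succ_pow {p : ℕ} (hp : 2 ≤ p) :
    Summable (fun n : ℕ => 1 / ((n : ℝ) + 1) ^ p) := by
  simpa using (summable_nat_add_iff 1).mpr (Real.summable_one_div_nat_pow.mpr hp)

lemma hasSum_zt {p : ℕ} (hp : 2 ≤ p) : HasSum (fun n : ℕ => 1 / ((n : ℝ) + 1) ^ p) (zt p) :=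
  (summable_one_div_succ_pow hp).hasSum

lemma zt_eq_of_hasSum {p : ℕ} {a : ℝ} (hp : p ≠ 0)
    (h : HasSum (fun n : ℕ => 1 / (n : ℝ) ^ p) a) : zt p = a := by
  have h' := (hasSum_nat_add_iff' 1).mpr h
  simp only [Finset.range_one, Finset.sum_singleton, Nat.cast_zero, zero_pow hp, div_zero,
    sub_zero, Nat.cast_add, Nat.cast_one] at h'
  exact h'.tsum_eq

lemma zt_two : zt 2 = π ^ 2 / 6 := zt_eq_of_hasSum two_ne_zero hasSum_zeta_two

lemma zt_four : zt 4 = π ^ 4 / 90 := zt_eq_of_hasSum four_ne_zero hasSum_zeta_four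

lemma Li_one (x : ℝ) : Li 1 x = -log (1 - x) := if_pos rfl

lemma Li_of_ne_one {p : ℕ} (hp : p ≠ 1) (x : ℝ) :
    Li p x = ∑' n : ℕ, x ^ (n + 1) / ((n : ℝ) + 1) ^ p := if_neg hp

lemma Li_apply_zero (p : ℕ) : Li p 0 = 0 := by
  by_cases hp : p = 1
  · simp [hp, Li_one]
  · simp [Li_of_ne_one hp]

lemma norm_pow_succ_div_succ_pow_le {p : ℕ} {x : ℝ} (hx : |x| ≤ 1) (n : ℕ) :
    ‖x ^ (n + 1) / ((n : ℝ) + 1) ^ p‖ ≤ 1 / ((n : ℝ) + 1) ^ p := by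
  rw [norm_div, norm_pow, Real.norm_eq_abs, norm_pow, Real.norm_of_nonneg (by positivity)]
  gcongr
  exact pow_le_one₀ (abs_nonneg x) hx

lemma hasSum_Li {p : ℕ} (hp : 2 ≤ p) {x : ℝ} (hx : |x| ≤ 1) :
    HasSum (fun n : ℕ => x ^ (n + 1) / ((n : ℝ) + 1) ^ p) (Li p x) := by
  rw [Li_of_ne_one (by omega)]
  exact ((summable_one_div_succ_pow hp).of_norm_bounded
    (norm_pow_succ_div_succ_pow_le hx)).hasSum

lemma Li_eq_tsum {p : ℕ} (hp : p ≠ 0) {x : ℝ} (hx : |x| < 1) :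
    Li p x = ∑' n : ℕ, x ^ (n + 1) / ((n : ℝ) + 1) ^ p := by
  obtain rfl | hp1 := eq_or_ne p 1
  · simpa [Li_one] using (hasSum_pow_div_log_of_abs_lt_one hx).tsum_eq.symm
  · exact Li_of_ne_one hp1 x

lemma continuousOn_Li {p : ℕ} (hp : 2 ≤ p) : ContinuousOn (Li p) (Icc (-1) 1) := by
  rw [show Li p = fun x => ∑' n : ℕ, x ^ (n + 1) / ((n : ℝ) + 1) ^ p from
    funext (Li_of_ne_one (by omega))]
  exact continuousOn_tsum (fun n => by fun_prop) (summable_one_div_succ_pow hp)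
    fun n x hx => norm_pow_succ_div_succ_pow_le (abs_le.mpr hx) n

lemma Li_neg_one {p : ℕ} (hp : 2 ≤ p) : Li p (-1) = (2 / 2 ^ p - 1) * zt p := by
  -- `Li_p(-1) + ζ(p)` keeps only the odd indices `n = 2k + 1`, i.e. `2 ∑ 1/(2k + 2)^p`.
  set f : ℕ → ℝ := fun n => ((-1) ^ (n + 1) + 1) / ((n : ℝ) + 1) ^ p with hf_def
  have hodd : ∀ k : ℕ, f (2 * k + 1) = 2 / 2 ^ p * (1 / ((k : ℝ) + 1) ^ p) := by
    intro k
    simp only [f, (by ring : 2 * k + 1 + 1 = 2 * (k + 1)), pow_mul]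
    push_cast
    rw [show 2 * (k : ℝ) + 1 + 1 = 2 * (k + 1) by ring, mul_pow]
    field_simp
    norm_num
  have heven : ∀ n, n ∉ Set.range (fun k : ℕ => 2 * k + 1) → f n = 0 := by
    intro n hn
    obtain ⟨k, rfl⟩ : Even n := by
      by_contra h
      obtain ⟨k, rfl⟩ := Nat.not_even_iff_odd.mp h
      exact hn ⟨k, rfl⟩
    simp [f, pow_succ]
  have hinj : Function.Injective fun k : ℕ => 2 * k + 1 := fun a b h => by
    simp only at h; omega
  have hf : HasSum f (2 / 2 ^ p * zt p) := by
    rw [← hinj.hasSum_iff heven]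
    simpa only [Function.comp_def, hodd] using (hasSum_zt hp).mul_left (2 / 2 ^ p)
  have h := hf.sub (hasSum_zt hp)
  simp only [hf_def, add_div, add_sub_cancel_right] at h
  rw [(hasSum_Li hp (by norm_num)).unique h]
  ring

lemma hasDerivAt_tsum_pow_succ_div_succ_pow (p : ℕ) {x : ℝ} (hx : |x| < 1) :
    HasDerivAt (fun y => ∑' n : ℕ, y ^ (n + 1) / ((n : ℝ) + 1) ^ (p + 1))
      (∑' n : ℕ, x ^ n / ((n : ℝ) + 1) ^ p) x := by
  obtain ⟨r, hxr, hr1⟩ := exists_between hx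
  have hr0 : 0 < r := (abs_nonneg x).trans_lt hxr
  refine hasDerivAt_tsum_of_isPreconnected
    (g := fun (n : ℕ) (y : ℝ) => y ^ (n + 1) / ((n : ℝ) + 1) ^ (p + 1))
    (g' := fun (n : ℕ) (y : ℝ) => y ^ n / ((n : ℝ) + 1) ^ p)
    (summable_geometric_of_lt_one hr0.le hr1) isOpen_Ioo isPreconnected_Ioo
    (fun n y _ => ?_) (fun n y hy => ?_)
    (by simpa using hr0 : (0 : ℝ) ∈ Ioo (-r) r) ?_ (abs_lt.mp hxr)
  · refine ((hasDerivAt_pow (n + 1) y).div_const (((n : ℝ) + 1) ^ (p + 1))).congr_deriv ?_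
    push_cast
    field_simp
    ring
  · rw [norm_div, norm_pow, Real.norm_eq_abs, Real.norm_of_nonneg (by positivity)]
    calc |y| ^ n / ((n : ℝ) + 1) ^ p ≤ |y| ^ n :=
          div_le_self (by positivity) (one_le_pow₀ (by linarith [n.cast_nonneg (α := ℝ)]))
      _ ≤ r ^ n := pow_le_pow_left₀ (abs_nonneg y) (abs_le.mpr ⟨hy.1.le, hy.2.le⟩) n
  · simp

lemma hasDerivAt_Li_succ {p : ℕ} (hp : p ≠ 0) {x : ℝ} (hx0 : x ≠ 0) (hx : |x| < 1) :
    HasDerivAt (Li (p + 1)) (Li p x / x) x := by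
  rw [funext (Li_of_ne_one (p := p + 1) (by omega))]
  convert hasDerivAt_tsum_pow_succ_div_succ_pow p hx using 1
  rw [Li_eq_tsum hp hx, div_eq_iff hx0, ← tsum_mul_right]
  exact tsum_congr fun n => by ring

lemma hasDerivAt_Li_one {x : ℝ} (hx : x < 1) : HasDerivAt (Li 1) (1 - x)⁻¹ x := by
  rw [funext Li_one]
  refine (((hasDerivAt_id' x).const_sub 1).log (sub_ne_zero.mpr hx.ne')).neg.congr_deriv ?_
  field_simp

lemma intervalIntegrable_Li_div_one_sub {p : ℕ} (hp : 2 ≤ p) :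
    IntervalIntegrable (fun y => Li p y / (1 - y)) volume (-1) 0 := by
  refine ContinuousOn.intervalIntegrable ?_
  rw [Set.uIcc_of_le (by norm_num)]
  exact ((continuousOn_Li hp).mono (Icc_subset_Icc_right zero_le_one)).div (by fun_prop)
    fun y hy => by linarith [hy.2]

lemma integral_Li_three_div_one_sub :
    ∫ y in (-1 : ℝ)..0, Li 3 y / (1 - y) = Li 2 (-1) ^ 2 / 2 - Li 1 (-1) * Li 3 (-1) := by
  have hIcc : Icc (-1 : ℝ) 0 ⊆ Icc (-1) 1 := Icc_subset_Icc_right zero_le_one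
  have hLi1 : ContinuousOn (Li 1) (Icc (-1) 0) := by
    rw [funext Li_one]
    exact (ContinuousOn.log (by fun_prop) fun y hy => by linarith [hy.2]).neg
  have hcont : ContinuousOn (fun y => Li 1 y * Li 3 y - Li 2 y ^ 2 / 2) (Icc (-1) 0) :=
    (hLi1.mul ((continuousOn_Li (by norm_num)).mono hIcc)).sub
      ((((continuousOn_Li le_rfl).mono hIcc).pow 2).div_const 2)
  have hderiv : ∀ y ∈ Ioo (-1 : ℝ) 0,
      HasDerivAt (fun y => Li 1 y * Li 3 y - Li 2 y ^ 2 / 2) (Li 3 y / (1 - y)) y := by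
    intro y hy
    have hy0 : y ≠ 0 := hy.2.ne
    have hy1 : |y| < 1 := abs_lt.mpr ⟨hy.1, by linarith [hy.2]⟩
    have hy1' : 1 - y ≠ 0 := by linarith [hy.2]
    refine (((hasDerivAt_Li_one (by linarith [hy.2])).mul
      (hasDerivAt_Li_succ two_ne_zero hy0 hy1)).sub
      (((hasDerivAt_Li_succ one_ne_zero hy0 hy1).pow 2).div_const 2)).congr_deriv ?_
    field_simp
    ring
  rw [integral_eq_sub_of_hasDerivAt_of_le (by norm_num) hcont hderiv
    (intervalIntegrable_Li_div_one_sub (by norm_num))]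
  simp [Li_apply_zero]

lemma integral_inv_one_sub : ∫ y in (-1 : ℝ)..0, (1 - y)⁻¹ = log 2 := by
  rw [integral_comp_sub_left (fun y => y⁻¹)]
  norm_num

lemma integral_geom_sum (m : ℕ) :
    ∫ y in (-1 : ℝ)..0, ∑ k ∈ Finset.range m, y ^ k
      = ∑ k ∈ Finset.range m, (-1 : ℝ) ^ k / ((k : ℝ) + 1) := by
  rw [integral_finsetSum fun k _ => (continuous_pow k).intervalIntegrable _ _]
  refine Finset.sum_congr rfl fun k _ => ?_
  rw [integral_pow]
  simp [pow_succ]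

lemma abs_geom_sum_le_two {y : ℝ} (hy : y ∈ Icc (-1) 0) (m : ℕ) :
    |∑ k ∈ Finset.range m, y ^ k| ≤ 2 := by
  have hym := abs_le.mp (show |y ^ m| ≤ 1 by
    rw [abs_pow]; exact pow_le_one₀ (abs_nonneg y) (abs_le.mpr ⟨hy.1, by linarith [hy.2]⟩))
  have hy1 : 1 ≤ 1 - y := by linarith [hy.2]
  calc |∑ k ∈ Finset.range m, y ^ k|
      ≤ |∑ k ∈ Finset.range m, y ^ k| * (1 - y) := le_mul_of_one_le_right (abs_nonneg _) hy1
    _ = |1 - y ^ m| := by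
      rw [← geom_sum_mul_neg, abs_mul, abs_of_pos (by linarith : (0 : ℝ) < 1 - y)]
    _ ≤ 2 := abs_le.mpr ⟨by linarith, by linarith⟩

lemma hasSum_one_div_pow_mul_geom_sum {p : ℕ} (hp : 2 ≤ p) {y : ℝ} (hy : |y| ≤ 1)
    (hy1 : y ≠ 1) :
    HasSum (fun n : ℕ => 1 / ((n : ℝ) + 1) ^ p * ∑ k ∈ Finset.range (n + 1), y ^ k)
      ((zt p - Li p y) / (1 - y)) := by
  refine (((hasSum_zt hp).sub (hasSum_Li hp hy)).div_const (1 - y)).congr_fun fun n => ?_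
  rw [eq_div_iff (sub_ne_zero.mpr hy1.symm), mul_assoc, geom_sum_mul_neg]
  ring

lemma tsum_one_div_pow_mul_alternating_eq_integral {p : ℕ} (hp : 2 ≤ p) :
    ∑' n : ℕ,
        1 / ((n : ℝ) + 1) ^ p * ∑ k ∈ Finset.range (n + 1), (-1 : ℝ) ^ k / ((k : ℝ) + 1)
      = ∫ y in (-1 : ℝ)..0, (zt p - Li p y) / (1 - y) := by
  have hIcc : ∀ y ∈ Ι (-1 : ℝ) 0, y ∈ Icc (-1) 0 := fun y hy => by
    rw [uIoc_of_le (by norm_num)] at hy; exact Ioc_subset_Icc_self hy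
  have h := hasSum_integral_of_dominated_convergence (μ := volume) (a := -1) (b := 0)
    (F := fun (n : ℕ) (y : ℝ) =>
      1 / ((n : ℝ) + 1) ^ p * ∑ k ∈ Finset.range (n + 1), y ^ k)
    (fun n _ => 2 / ((n : ℝ) + 1) ^ p)
    (fun n => (by fun_prop : Continuous _).aestronglyMeasurable)
    (fun n => Eventually.of_forall fun y hy => by
      rw [norm_mul, Real.norm_of_nonneg (by positivity), Real.norm_eq_abs]
      exact (mul_le_mul_of_nonneg_left (abs_geom_sum_le_two (hIcc y hy) _)
        (by positivity)).trans_eq (by ring))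
    (Eventually.of_forall fun y _ =>
      ((summable_one_div_succ_pow hp).mul_left 2).congr fun n => by ring)
    intervalIntegrable_const
    (Eventually.of_forall fun y hy => hasSum_one_div_pow_mul_geom_sum hp
      (abs_le.mpr ⟨(hIcc y hy).1, by linarith [(hIcc y hy).2]⟩) (by linarith [(hIcc y hy).2]))
  simp only [intervalIntegral.integral_const_mul, integral_geom_sum] at h
  exact h.tsum_eq

theorem stmt3 :
    ∑' n : ℕ, (1 / ((n : ℝ) + 1) ^ 3 * ∑ k ∈ Finset.range (n + 1), (-1 : ℝ) ^ k / ((k : ℝ) + 1))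
      = 7/4 * zt 3 * Real.log 2 - 5/16 * zt 4 := by
  have hsplit : ∀ y : ℝ, (zt 3 - Li 3 y) / (1 - y) = zt 3 * (1 - y)⁻¹ - Li 3 y / (1 - y) :=
    fun y => by ring
  have hinv : IntervalIntegrable (fun y : ℝ => (1 - y)⁻¹) volume (-1) 0 :=
    intervalIntegrable_inv
      (fun y hy => by rw [Set.uIcc_of_le (by norm_num)] at hy; linarith [hy.2]) (by fun_prop)
  simp_rw [tsum_one_div_pow_mul_alternating_eq_integral (by norm_num : 2 ≤ 3), hsplit]
  rw [integral_sub (hinv.const_mul _) (intervalIntegrable_Li_div_one_sub (by norm_num)),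
    intervalIntegral.integral_const_mul, integral_inv_one_sub, integral_Li_three_div_one_sub,
    Li_one, Li_neg_one (p := 2) le_rfl, Li_neg_one (p := 3) (by norm_num), zt_two, zt_four]
  norm_num
  ring
end

section
/- For every real x with −1 < x < 1 and every integer m ≥ 2: ∑_{n=1}^∞ H_n H_n^{(m)} xⁿ = (1/(1−x)) · (∑_{n=1}^∞ (H_n/n^m) xⁿ − ∑_{n=1}^∞ (1/n^m) ∑_{k=1}^n x^k/k − ζ(m)·ln(1−x)). -/
open Real Filter

lemma H_nonneg (m n : ℕ) : 0 ≤ H m n :=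
  Finset.sum_nonneg fun j _ => by positivity

lemma H_le (m n : ℕ) : H m n ≤ n := by
  have h : ∀ j ∈ Finset.range n, 1 / ((j : ℝ) + 1) ^ m ≤ 1 := by
    intro j _
    rw [div_le_one (by positivity)]
    exact one_le_pow₀ (by linarith [Nat.cast_nonneg (α := ℝ) j])
  calc H m n ≤ ∑ _j ∈ Finset.range n, (1 : ℝ) := Finset.sum_le_sum h
    _ = n := by simp

lemma H_succ (m n : ℕ) : H m (n + 1) = H m n + 1 / ((n : ℝ) + 1) ^ m :=
  Finset.sum_range_succ _ _

lemma sq_geo_summable {x : ℝ} (hx : |x| < 1) :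
    Summable (fun n : ℕ => ((n : ℝ) + 1) ^ 2 * |x| ^ (n + 1)) := by
  have h := summable_pow_mul_geometric_of_norm_lt_one (R := ℝ) 2
    (by rwa [Real.norm_eq_abs, abs_abs])
  have h2 := (summable_nat_add_iff 1).2 h
  refine h2.congr fun n => ?_
  push_cast
  ring

lemma summable_of_bound {x : ℝ} (hx : |x| < 1) {f : ℕ → ℝ}
    (h : ∀ n, |f n| ≤ ((n : ℝ) + 1) ^ 2 * |x| ^ (n + 1)) : Summable f :=
  Summable.of_norm_bounded (sq_geo_summable hx) (by simpa using h)

lemma summable_one_div_pow {m : ℕ} (hm : 2 ≤ m) :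
    Summable (fun n : ℕ => 1 / ((n : ℝ) + 1) ^ m) := by
  have h := (Real.summable_one_div_nat_pow (p := m)).2 hm
  have h2 := (summable_nat_add_iff 1).2 h
  refine h2.congr fun n => ?_
  push_cast
  ring

set_option maxHeartbeats 2000000 in
theorem stmt6 (x : ℝ) (hx₁ : -1 < x) (hx₂ : x < 1) (m : ℕ) (hm : 2 ≤ m) :
    ∑' n : ℕ, H 1 (n + 1) * H m (n + 1) * x ^ (n + 1)
      = 1 / (1 - x) * ((∑' n : ℕ, H 1 (n + 1) / ((n : ℝ) + 1) ^ m * x ^ (n + 1))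
        - (∑' n : ℕ, 1 / ((n : ℝ) + 1) ^ m
            * ∑ k ∈ Finset.range (n + 1), x ^ (k + 1) / ((k : ℝ) + 1))
        - zt m * Real.log (1 - x)) := by
  have hax : |x| < 1 := abs_lt.mpr ⟨hx₁, hx₂⟩
  have hx0 : (1 : ℝ) - x ≠ 0 := by intro h; nlinarith
  have hz : Summable (fun n : ℕ => 1 / ((n : ℝ) + 1) ^ m) := summable_one_div_pow hm
  have hz2 : Summable (fun n : ℕ => 1 / ((n : ℝ) + 1) ^ 2) := summable_one_div_pow le_rfl
  -- basic bounds
  have hHle : ∀ n : ℕ, H m n ≤ zt m := by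
    intro n
    have := Summable.sum_le_tsum (Finset.range n) (fun i _ => by positivity) hz
    simpa [H, zt] using this
  have hzt_nonneg : 0 ≤ zt m := le_trans (H_nonneg m 0) (hHle 0)
  -- abbreviations
  set a : ℕ → ℝ := fun n => H 1 (n + 1) * H m (n + 1) with ha
  set q : ℕ → ℝ := fun k => x ^ (k + 1) / ((k : ℝ) + 1) with hq
  set g : ℕ → ℝ := fun n => H 1 (n + 1) / ((n : ℝ) + 1) ^ m * x ^ (n + 1) + H m n * q n
    with hg
  -- summability facts
  have sT : Summable (fun n : ℕ => a n * x ^ (n + 1)) := by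
    apply summable_of_bound hax
    intro n
    rw [abs_mul, abs_pow]
    apply mul_le_mul_of_nonneg_right _ (by positivity)
    have h1 : |a n| = a n := abs_of_nonneg (mul_nonneg (H_nonneg _ _) (H_nonneg _ _))
    rw [h1, ha]
    beta_reduce
    have b1 := H_le 1 (n + 1)
    have b2 := H_le m (n + 1)
    have p1 := H_nonneg 1 (n + 1)
    have p2 := H_nonneg m (n + 1)
    push_cast at b1 b2 ⊢
    nlinarith
  have sA : Summable (fun n : ℕ => H 1 (n + 1) / ((n : ℝ) + 1) ^ m * x ^ (n + 1)) := by
    apply summable_of_bound hax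
    intro n
    rw [abs_mul, abs_pow]
    apply mul_le_mul_of_nonneg_right _ (by positivity)
    have hd : (1 : ℝ) ≤ ((n : ℝ) + 1) ^ m := one_le_pow₀ (by linarith [Nat.cast_nonneg (α := ℝ) n])
    have b1 := H_le 1 (n + 1)
    have p1 := H_nonneg 1 (n + 1)
    have hpm : (0:ℝ) ≤ ((n : ℝ) + 1) ^ m := by positivity
    rw [abs_div, abs_of_nonneg p1, abs_of_nonneg hpm]
    have : H 1 (n + 1) / ((n : ℝ) + 1) ^ m ≤ H 1 (n + 1) := by
      apply div_le_self p1 hd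
    push_cast at b1
    nlinarith [Nat.cast_nonneg (α := ℝ) n]
  have sC : Summable (fun n : ℕ => H m n * q n) := by
    apply summable_of_bound hax
    intro n
    rw [hq, abs_mul]
    have hqb : |x ^ (n + 1) / ((n : ℝ) + 1)| ≤ |x| ^ (n + 1) := by
      rw [abs_div, abs_pow]
      apply div_le_self (by positivity)
      rw [abs_of_nonneg (by positivity : (0:ℝ) ≤ (n : ℝ) + 1)]
      linarith [Nat.cast_nonneg (α := ℝ) n]
    have b1 := H_le m n
    have p1 := H_nonneg m n
    rw [abs_of_nonneg p1]
    have hn1 : (n : ℝ) ≤ ((n : ℝ) + 1) ^ 2 := by nlinarith [Nat.cast_nonneg (α := ℝ) n]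
    exact mul_le_mul (le_trans b1 hn1) hqb (abs_nonneg _) (by positivity)
  have sG : Summable g := sA.add sC
  have sgeo : Summable (fun k : ℕ => |x| ^ (k + 1)) :=
    (summable_nat_add_iff 1).2 (summable_geometric_of_lt_one (abs_nonneg x) hax)
  have key1 : (1 - x) * (∑' n : ℕ, a n * x ^ (n + 1)) = ∑' n : ℕ, g n := by
    have hshift : Summable (fun n : ℕ => a (n + 1) * x ^ (n + 2)) := by
      have := (summable_nat_add_iff 1).2 sT
      exact this.congr fun n => by ring_nf
    have hxT : x * (∑' n : ℕ, a n * x ^ (n + 1)) = ∑' n : ℕ, a n * x ^ (n + 2) := by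
      rw [← tsum_mul_left]
      exact tsum_congr fun n => by ring
    have hT : (∑' n : ℕ, a n * x ^ (n + 1))
        = a 0 * x + ∑' n : ℕ, a (n + 1) * x ^ (n + 2) := by
      rw [Summable.tsum_eq_zero_add sT]
      norm_num
    have hG : (∑' n : ℕ, g n) = g 0 + ∑' n : ℕ, g (n + 1) := Summable.tsum_eq_zero_add sG
    have hdiff : ∀ n : ℕ, a (n + 1) * x ^ (n + 2) - a n * x ^ (n + 2) = g (n + 1) := by
      intro n
      rw [hg, ha, hq]
      beta_reduce
      rw [H_succ m (n + 1), H_succ 1 (n + 1)]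
      push_cast
      field_simp
      ring
    have hsub : (∑' n : ℕ, a (n + 1) * x ^ (n + 2)) - (∑' n : ℕ, a n * x ^ (n + 2)) =
        ∑' n : ℕ, g (n + 1) := by
      have hs2 : Summable fun n : ℕ => a n * x ^ (n + 2) := by
        have := sT.mul_left x
        exact this.congr (fun n => by ring)
      rw [← Summable.tsum_sub hshift hs2]
      exact tsum_congr fun n => hdiff n
    have hg0 : a 0 * x = g 0 := by
      simp only [hg, ha, hq, H]
      norm_num
    rw [sub_mul, one_mul, hxT, hT, hG, ← hg0]
    linarith [hsub]
  -- Step B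
  set F := (fun (n k : ℕ) => if k ≤ n then (1 / ((n : ℝ) + 1) ^ m) * q k else 0) with hF
  have hprod : Summable (fun p : ℕ × ℕ => (1 / ((p.1 : ℝ) + 1) ^ 2) * |x| ^ (p.2 + 1)) :=
    hz2.mul_of_nonneg sgeo (fun n => by positivity) (fun k => by positivity)
  have hle : ∀ p : ℕ × ℕ,
      ‖Function.uncurry F p‖ ≤ (1 / ((p.1 : ℝ) + 1) ^ 2) * |x| ^ (p.2 + 1) := by
    rintro ⟨n, k⟩
    simp only [Function.uncurry, hF]
    by_cases h : k ≤ n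
    · rw [if_pos h, norm_mul]
      apply mul_le_mul
      · rw [Real.norm_eq_abs, abs_of_nonneg (by positivity : (0:ℝ) ≤ 1 / ((n : ℝ) + 1) ^ m)]
        apply one_div_le_one_div_of_le (by positivity)
        exact pow_le_pow_right₀ (by linarith [Nat.cast_nonneg (α := ℝ) n]) hm
      · rw [hq, Real.norm_eq_abs, abs_div, abs_pow]
        apply div_le_self (by positivity)
        rw [abs_of_nonneg (by positivity : (0:ℝ) ≤ (k : ℝ) + 1)]
        linarith [Nat.cast_nonneg (α := ℝ) k]
      · positivity
      · positivity
    · rw [if_neg h]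
      simp
      positivity
  have hFsum : Summable (Function.uncurry F) :=
    Summable.of_norm_bounded hprod hle
  have hBswap : (∑' n : ℕ, 1 / ((n : ℝ) + 1) ^ m
        * ∑ k ∈ Finset.range (n + 1), x ^ (k + 1) / ((k : ℝ) + 1))
      = ∑' k : ℕ, (zt m - H m k) * q k := by
    have h1 : ∀ n : ℕ, 1 / ((n : ℝ) + 1) ^ m
        * ∑ k ∈ Finset.range (n + 1), x ^ (k + 1) / ((k : ℝ) + 1) = ∑' k : ℕ, F n k := by
      intro n
      rw [tsum_eq_sum (s := Finset.range (n + 1))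
        (fun k hk => by rw [hF]; simp only; rw [if_neg]; simpa using fun h => hk (Finset.mem_range.2 (Nat.lt_succ_of_le h)))]
      rw [Finset.mul_sum]
      apply Finset.sum_congr rfl
      intro k hk
      rw [hF]
      beta_reduce
      rw [if_pos (Nat.lt_succ_iff.1 (Finset.mem_range.1 hk)), hq]
    have h2 : ∀ k : ℕ, (∑' n : ℕ, F n k) = (zt m - H m k) * q k := by
      intro k
      have e1 : ∀ n : ℕ, F n k = (if k ≤ n then 1 / ((n : ℝ) + 1) ^ m else 0) * q k := by
        intro n
        rw [hF]
        simp only [ite_mul, zero_mul]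
      rw [tsum_congr e1, tsum_mul_right]
      congr 1
      have hinj : Function.Injective (fun n : ℕ => n + k) := add_left_injective k
      have e2 : (∑' n : ℕ, (if k ≤ n then 1 / ((n : ℝ) + 1) ^ m else 0))
          = ∑' n : ℕ, 1 / (((n + k : ℕ) : ℝ) + 1) ^ m := by
        have hsupp : Function.support (fun n : ℕ => if k ≤ n then 1 / ((n : ℝ) + 1) ^ m else 0)
            ⊆ Set.range (fun n : ℕ => n + k) := by
          intro n hn
          simp only [Function.mem_support] at hn
          have hkn : k ≤ n := by
            by_contra hkn
            exact hn (if_neg hkn)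
          exact ⟨n - k, by simp; omega⟩
        rw [← hinj.tsum_eq hsupp]
        apply tsum_congr
        intro n
        beta_reduce
        rw [if_pos (Nat.le_add_left k n)]
      rw [e2]
      have := Summable.sum_add_tsum_nat_add k hz
      have hHmk : (∑ i ∈ Finset.range k, 1 / ((i : ℝ) + 1) ^ m) = H m k := rfl
      rw [hHmk] at this
      have : (∑' n : ℕ, 1 / (((n + k : ℕ) : ℝ) + 1) ^ m) = zt m - H m k := by
        have h3 := Summable.sum_add_tsum_nat_add k hz
        rw [hHmk] at h3
        have : (∑' (i : ℕ), 1 / ((↑(i + k) : ℝ) + 1) ^ m) = zt m - H m k := by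
          rw [← zt] at h3
          push_cast at h3 ⊢
          linarith [h3]
        exact this
      rw [this]
    rw [tsum_congr h1, ← Summable.tsum_comm hFsum]
    exact tsum_congr h2
  -- log series
  have hL : (∑' k : ℕ, q k) = -Real.log (1 - x) := by
    rw [hq]
    exact (hasSum_pow_div_log_of_abs_lt_one hax).tsum_eq
  have sq_sum : Summable q := (hasSum_pow_div_log_of_abs_lt_one hax).summable
  have sTail : Summable (fun k : ℕ => (zt m - H m k) * q k) := by
    apply Summable.of_norm_bounded (g := fun k : ℕ => zt m * |x| ^ (k + 1)) (sgeo.mul_left _)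
    intro k
    rw [Real.norm_eq_abs, abs_mul]
    apply mul_le_mul
    · rw [abs_of_nonneg (by linarith [hHle k])]
      linarith [H_nonneg m k]
    · rw [hq, abs_div, abs_pow]
      apply div_le_self (by positivity)
      rw [abs_of_nonneg (by positivity : (0:ℝ) ≤ (k : ℝ) + 1)]
      linarith [Nat.cast_nonneg (α := ℝ) k]
    · positivity
    · exact hzt_nonneg
  have key2 : (∑' n : ℕ, H 1 (n + 1) / ((n : ℝ) + 1) ^ m * x ^ (n + 1))
      - (∑' n : ℕ, 1 / ((n : ℝ) + 1) ^ m
          * ∑ k ∈ Finset.range (n + 1), x ^ (k + 1) / ((k : ℝ) + 1))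
      - zt m * Real.log (1 - x) = ∑' n : ℕ, g n := by
    have hzl : zt m * Real.log (1 - x) = -∑' k : ℕ, zt m * q k := by
      rw [tsum_mul_left, hL]
      ring
    rw [hBswap, hzl]
    have e : (∑' k : ℕ, zt m * q k) - (∑' k : ℕ, (zt m - H m k) * q k)
        = ∑' k : ℕ, H m k * q k := by
      rw [← Summable.tsum_sub (sq_sum.mul_left _) sTail]
      exact tsum_congr fun k => by ring
    have : (∑' n : ℕ, g n) = (∑' n : ℕ, H 1 (n + 1) / ((n : ℝ) + 1) ^ m * x ^ (n + 1))
        + ∑' k : ℕ, H m k * q k := by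
      rw [hg, Summable.tsum_add sA sC]
    rw [this, ← e]
    ring
  have hT : (∑' n : ℕ, H 1 (n + 1) * H m (n + 1) * x ^ (n + 1))
      = ∑' n : ℕ, a n * x ^ (n + 1) := tsum_congr fun n => by rw [ha]
  rw [hT, key2, mul_comm, mul_one_div, eq_div_iff hx0]
  linarith [key1]
end
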